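/- arXiv:1902.08330 — 2 statements merged into one kernel-verified Lean document; each statement's English description precedes it below -/
import Mathlib

section
/- If $\vec{w} = (w_1,\ldots,w_m) \in A_{(1,\ldots,1)}$, i.e., $[\vec{w}]_{A_{(1,\ldots,1)}} = \sup_Q \left(\frac{1}{|Q|}\int_Q v_{\vec w}\right)^{m} \prod_{i=1}^m (\operatorname{ess\,inf}_Q w_i)^{-1} < \infty$ where $v_{\vec w} = \prod_{i=1}^m w_i^{1/m}$, then $v_{\vec w} \in A_m$ with $[v_{\vec w}]_{A_m} \le [\vec w]_{A_{(1,\ldots,1)}}^{1/m}$. -/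
open MeasureTheory ENNReal Set Filter

noncomputable section

abbrev Rn (n : ℕ) := EuclideanSpace ℝ (Fin n)

def cube {n : ℕ} (c : Rn n) (r : ℝ) : Set (Rn n) := {x | ∀ i, |x i - c i| ≤ r / 2}

def A1Bound {n : ℕ} (w : Rn n → ℝ) (C : ℝ) : Prop :=
  ∀ (c : Rn n) (r : ℝ), 0 < r →
    ∫ x in cube c r, w x ≤
      C * (volume (cube c r)).toReal * essInf w (volume.restrict (cube c r))

/-- `C` bounds the multilinear `A_{(1,…,1)}` characteristic of `w⃗`:
for every cube `Q`, `(avg_Q v_{w⃗})^m ≤ C ∏ᵢ essinf_Q wᵢ`, where `v_{w⃗} = ∏ᵢ wᵢ^{1/m}`. -/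
def MultiA1Bound {n m : ℕ} (w : Fin m → Rn n → ℝ) (C : ℝ) : Prop :=
  ∀ (c : Rn n) (r : ℝ), 0 < r →
    ((∫ x in cube c r, ∏ i, w i x ^ ((1 : ℝ) / m)) / (volume (cube c r)).toReal) ^ m ≤
      C * ∏ i, essInf (w i) (volume.restrict (cube c r))

/-- `C` bounds the Muckenhoupt `A_p` characteristic of `v` (for `p = 1` this is the
`A₁` condition). -/
def ApBound {n : ℕ} (p : ℕ) (v : Rn n → ℝ) (C : ℝ) : Prop :=
  if p = 1 then A1Bound v C
  else
    ∀ (c : Rn n) (r : ℝ), 0 < r →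
      ((∫ x in cube c r, v x) / (volume (cube c r)).toReal) *
          ((∫ x in cube c r, v x ^ (1 - (p : ℝ) / ((p : ℝ) - 1))) /
              (volume (cube c r)).toReal) ^ (p - 1) ≤ C

/- Auxiliary lemmas -/

lemma essInf_nonneg'' {α : Type*} {_ : MeasurableSpace α} {μ : Measure α} {f : α → ℝ}
    (h : ∀ᵐ x ∂μ, 0 ≤ f x) : 0 ≤ essInf f μ := by
  have h0 : (0 : ℝ) ∈ {a : ℝ | ∀ᶠ x in ae μ, a ≤ f x} := h
  rw [essInf, Filter.liminf_eq]
  by_cases hb : BddAbove {a : ℝ | ∀ᶠ x in ae μ, a ≤ f x}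
  · exact le_csSup hb h0
  · rw [csSup_of_not_bddAbove hb, Real.sSup_empty]

lemma cube_vol_pos {n : ℕ} (c : Rn n) {r : ℝ} (hr : 0 < r) : 0 < volume (cube c r) := by
  have hopen : IsOpen {x : Rn n | ∀ i, |x i - c i| < r / 2} := by
    have heq : {x : Rn n | ∀ i, |x i - c i| < r / 2}
        = ⋂ i, {x : Rn n | |x i - c i| < r / 2} := by
      ext x; simp
    rw [heq]
    exact isOpen_iInter_of_finite fun i =>
      isOpen_lt (Continuous.abs (Continuous.sub
        ((EuclideanSpace.proj (𝕜 := ℝ) i : Rn n →L[ℝ] ℝ).continuous) continuous_const))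
        continuous_const
  have hc : c ∈ {x : Rn n | ∀ i, |x i - c i| < r / 2} := fun i => by
    simpa using half_pos hr
  have hpos := hopen.measure_pos volume ⟨c, hc⟩
  exact hpos.trans_le (measure_mono fun x hx i => (hx i).le)

lemma cube_vol_lt_top {n : ℕ} (c : Rn n) (r : ℝ) : volume (cube c r) < ⊤ := by
  have hsub : cube c r ⊆ Metric.closedBall c (Real.sqrt (n * (r / 2) ^ 2)) := by
    intro x hx
    rw [Metric.mem_closedBall, EuclideanSpace.dist_eq]
    apply Real.sqrt_le_sqrt
    calc ∑ i, dist (x i) (c i) ^ 2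
        ≤ ∑ _i : Fin n, (r / 2) ^ 2 := by
          refine Finset.sum_le_sum fun i _ => ?_
          rw [Real.dist_eq]
          exact pow_le_pow_left₀ (abs_nonneg _) (hx i) 2
      _ = n * (r / 2) ^ 2 := by simp [Finset.sum_const, nsmul_eq_mul]
  exact lt_of_le_of_lt (measure_mono hsub) (isCompact_closedBall _ _).measure_lt_top

/-- If `w⃗ ∈ A_{(1,…,1)}`, then `v_{w⃗} ∈ A_m` with `[v_{w⃗}]_{A_m} ≤ [w⃗]^{1/m}`. -/
theorem stmt7 {n m : ℕ} (hm : 1 ≤ m) (w : Fin m → Rn n → ℝ) (Cw : ℝ)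
    (hw : ∀ i, LocallyIntegrable (w i) volume) (hpos : ∀ i, ∀ᵐ x, 0 < w i x)
    (hCw : 0 ≤ Cw) (hA : MultiA1Bound w Cw) :
    ApBound m (fun x => ∏ i, w i x ^ ((1 : ℝ) / m)) (Cw ^ ((1 : ℝ) / m)) := by
  have hm0 : ((m : ℝ)) ≠ 0 := Nat.cast_ne_zero.2 (by omega)
  by_cases hm1 : m = 1
  · subst hm1
    unfold ApBound
    rw [if_pos rfl]
    intro c r hr
    have hV : 0 < (volume (cube c r)).toReal :=
      ENNReal.toReal_pos (cube_vol_pos c hr).ne' (cube_vol_lt_top c r).ne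
    have hveq : (fun x : Rn n => ∏ i, w i x ^ ((1 : ℝ) / ((1 : ℕ) : ℝ))) = w 0 := by
      funext x; simp
    have h := hA c r hr
    rw [hveq] at h ⊢
    simp only [pow_one, Fin.prod_univ_one] at h
    rw [div_le_iff₀ hV] at h
    rw [show ((1 : ℝ) / ((1 : ℕ) : ℝ)) = 1 by norm_num, Real.rpow_one]
    calc ∫ x in cube c r, w 0 x
        ≤ Cw * essInf (w 0) (volume.restrict (cube c r)) * (volume (cube c r)).toReal := h
      _ = Cw * (volume (cube c r)).toReal * essInf (w 0) (volume.restrict (cube c r)) := by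
          ring
  · unfold ApBound
    rw [if_neg hm1]
    intro c r hr
    dsimp only
    have hVpos : 0 < volume (cube c r) := cube_vol_pos c hr
    have hVlt : volume (cube c r) < ⊤ := cube_vol_lt_top c r
    have hV : 0 < (volume (cube c r)).toReal := ENNReal.toReal_pos hVpos.ne' hVlt.ne
    set μQ := volume.restrict (cube c r) with hμQ
    have hμne : μQ ≠ 0 := by
      intro h0
      have h1 : volume (cube c r) = 0 := by
        have h2 := congrArg (fun ν : Measure (Rn n) => ν Set.univ) h0
        simpa [hμQ, Measure.restrict_apply_univ] using h2
      exact hVpos.ne' h1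
    haveI : (ae μQ).NeBot := ae_neBot.2 hμne
    haveI : IsFiniteMeasure μQ := ⟨by rw [hμQ, Measure.restrict_apply_univ]; exact hVlt⟩
    set E : Fin m → ℝ := fun i => essInf (w i) μQ with hE
    have hposQ : ∀ i, ∀ᵐ x ∂μQ, 0 < w i x := fun i => ae_restrict_of_ae (hpos i)
    have hE0 : ∀ i, 0 ≤ E i := fun i =>
      essInf_nonneg'' ((hposQ i).mono fun x hx => hx.le)
    have hEle : ∀ i, ∀ᵐ x ∂μQ, E i ≤ w i x := fun i =>
      ae_essInf_le ⟨0, eventually_map.2 ((hposQ i).mono fun x hx => hx.le)⟩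
    have hvnn : ∀ᵐ x ∂μQ, 0 ≤ ∏ i, w i x ^ ((1 : ℝ) / m) := by
      filter_upwards [ae_all_iff.2 hposQ] with x hx
      exact Finset.prod_nonneg fun i _ => Real.rpow_nonneg (hx i).le _
    have hInn : 0 ≤ ∫ x in cube c r, ∏ i, w i x ^ ((1 : ℝ) / m) :=
      integral_nonneg_of_ae hvnn
    set A := (∫ x in cube c r, ∏ i, w i x ^ ((1 : ℝ) / m)) / (volume (cube c r)).toReal
      with hAdef
    have hAnn : 0 ≤ A := div_nonneg hInn hV.le
    have hAm : A ^ m ≤ Cw * ∏ i, E i := hA c r hr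
    set q : ℝ := 1 - (m : ℝ) / ((m : ℝ) - 1) with hq
    by_cases hEz : ∃ i, E i = 0
    · obtain ⟨i0, hi0⟩ := hEz
      have hprod : ∏ i, E i = 0 := Finset.prod_eq_zero (Finset.mem_univ i0) hi0
      have hle0 : A ^ m ≤ 0 := by rw [hprod, mul_zero] at hAm; exact hAm
      have hA0 : A = 0 :=
        pow_eq_zero_iff (by omega : m ≠ 0) |>.1 (le_antisymm hle0 (pow_nonneg hAnn m))
      rw [hA0, zero_mul]
      exact Real.rpow_nonneg hCw _
    · push_neg at hEz
      have hEpos : ∀ i, 0 < E i := fun i => (hE0 i).lt_of_ne' (hEz i)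
      have hm2 : 2 ≤ m := by omega
      have hmR : (1 : ℝ) < (m : ℝ) := by exact_mod_cast hm2.trans_lt' one_lt_two
      have hm1R : (0 : ℝ) < (m : ℝ) - 1 := by linarith
      have hqneg : q ≤ 0 := by
        rw [hq, sub_nonpos, le_div_iff₀ hm1R]; linarith
      have hqm : q / (m : ℝ) ≤ 0 :=
        div_nonpos_of_nonpos_of_nonneg hqneg (by positivity)
      set K : ℝ := ∏ i, (E i) ^ (q / (m : ℝ)) with hK
      have hKnn : 0 ≤ K := Finset.prod_nonneg fun i _ => Real.rpow_nonneg (hE0 i) _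
      have hbd : ∀ᵐ x ∂μQ,
          (∏ i, w i x ^ ((1 : ℝ) / m)) ^ q ≤ K ∧
            0 ≤ (∏ i, w i x ^ ((1 : ℝ) / m)) ^ q := by
        filter_upwards [ae_all_iff.2 hposQ, ae_all_iff.2 hEle] with x hx hle
        have hnn : ∀ i ∈ Finset.univ, 0 ≤ w i x ^ ((1 : ℝ) / m) :=
          fun i _ => Real.rpow_nonneg (hx i).le _
        constructor
        · rw [← Real.finset_prod_rpow _ _ hnn q]
          rw [hK]
          refine Finset.prod_le_prod (fun i _ => Real.rpow_nonneg (Real.rpow_nonneg (hx i).le _) _)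
            (fun i _ => ?_)
          rw [← Real.rpow_mul (hx i).le, show ((1 : ℝ) / m) * q = q / (m : ℝ) by ring]
          exact Real.rpow_le_rpow_of_nonpos (hEpos i) (hle i) hqm
        · exact Real.rpow_nonneg (Finset.prod_nonneg hnn) _
      have hmeas : AEStronglyMeasurable
          (fun x => (∏ i, w i x ^ ((1 : ℝ) / m)) ^ q) μQ := by
        refine AEMeasurable.aestronglyMeasurable ?_
        refine AEMeasurable.pow ?_ aemeasurable_const
        exact Finset.aemeasurable_fun_prod _ fun i _ =>
          ((hw i).aestronglyMeasurable.aemeasurable.restrict).pow aemeasurable_const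
      have hint : Integrable (fun x => (∏ i, w i x ^ ((1 : ℝ) / m)) ^ q) μQ := by
        refine Integrable.mono' (integrable_const K) hmeas ?_
        filter_upwards [hbd] with x hx
        rw [Real.norm_eq_abs, abs_of_nonneg hx.2]
        exact hx.1
      have hJle : (∫ x in cube c r, (∏ i, w i x ^ ((1 : ℝ) / m)) ^ q)
          ≤ K * (volume (cube c r)).toReal := by
        calc (∫ x in cube c r, (∏ i, w i x ^ ((1 : ℝ) / m)) ^ q)
            ≤ ∫ _x in cube c r, K := by
              exact integral_mono_ae hint (integrable_const K) (hbd.mono fun x hx => hx.1)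
          _ = K * (volume (cube c r)).toReal := by
              rw [setIntegral_const, smul_eq_mul, mul_comm]; rfl
      have hJnn : 0 ≤ ∫ x in cube c r, (∏ i, w i x ^ ((1 : ℝ) / m)) ^ q :=
        integral_nonneg_of_ae (hbd.mono fun x hx => hx.2)
      set B := (∫ x in cube c r, (∏ i, w i x ^ ((1 : ℝ) / m)) ^ q)
          / (volume (cube c r)).toReal with hBdef
      have hBnn : 0 ≤ B := div_nonneg hJnn hV.le
      have hBK : B ≤ K := (div_le_iff₀ hV).2 hJle
      have hEprodnn : 0 ≤ ∏ i, E i := Finset.prod_nonneg fun i _ => hE0 i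
      have hAle : A ≤ (Cw * ∏ i, E i) ^ ((1 : ℝ) / m) := by
        have h1 : A = (A ^ m) ^ ((1 : ℝ) / m) := by
          rw [← Real.rpow_natCast A m, ← Real.rpow_mul hAnn, mul_one_div, div_self hm0,
            Real.rpow_one]
        rw [h1]
        exact Real.rpow_le_rpow (pow_nonneg hAnn m) hAm (by positivity)
      have hcast : ((m - 1 : ℕ) : ℝ) = (m : ℝ) - 1 := by
        rw [Nat.cast_sub hm, Nat.cast_one]
      have key : ∀ i, (E i) ^ ((1 : ℝ) / m) * ((E i) ^ (q / (m : ℝ))) ^ (m - 1) = 1 := by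
        intro i
        rw [← Real.rpow_natCast ((E i) ^ (q / (m : ℝ))) (m - 1), ← Real.rpow_mul (hE0 i),
          ← Real.rpow_add (hEpos i), hcast]
        have hzero : (1 : ℝ) / m + q / (m : ℝ) * ((m : ℝ) - 1) = 0 := by
          rw [hq]; field_simp; ring
        rw [hzero, Real.rpow_zero]
      calc A * B ^ (m - 1)
          ≤ (Cw * ∏ i, E i) ^ ((1 : ℝ) / m) * K ^ (m - 1) := by
            exact mul_le_mul hAle (pow_le_pow_left₀ hBnn hBK _) (pow_nonneg hBnn _)
              (Real.rpow_nonneg (mul_nonneg hCw hEprodnn) _)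
        _ = Cw ^ ((1 : ℝ) / m) *
              ((∏ i, (E i) ^ ((1 : ℝ) / m)) * ∏ i, ((E i) ^ (q / (m : ℝ))) ^ (m - 1)) := by
            rw [Real.mul_rpow hCw hEprodnn,
              ← Real.finset_prod_rpow _ _ (fun i _ => hE0 i) _, hK, ← Finset.prod_pow,
              mul_assoc]
        _ = Cw ^ ((1 : ℝ) / m) := by
            rw [← Finset.prod_mul_distrib, Finset.prod_congr rfl (fun i _ => key i)]
            simp
end
end

section
/- Let $\vec w = (w_1, \ldots, w_m)$ be weights on $\mathbb{R}^n$ with $w_i^{1/m} \in A_1$ for each $i$, and let $v_{\vec w} = \prod_{i=1}^m w_i^{1/m}$. Then $\vec w \in A_{(1,\ldots,1)}$ with $[\vec w]_{A_{(1,\ldots,1)}} \le [v_{\vec w}]_{A_m}^{m} \prod_{i=1}^m [w_i^{1/m}]_{A_1}^{m}$, provided $v_{\vec w} \in A_m$. -/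
/-!
Write `gᵢ = wᵢ^{1/m}` and `v = ∏ gᵢ`. On a cube, Hölder's inequality with exponent
`(m-1)/(2m-1)` on `v^{-1/(m-1)}` and `1/(2m-1)` on each `gᵢ` (the product of the powers is
identically `1`) gives `1 ≤ (⨍ v^{-1/(m-1)})^{m-1} ∏ ⨍ gᵢ`; here `v^{-1/(m-1)}` is integrable
because the `A₁` condition forces `ess inf gᵢ > 0`. Multiplying by `⨍ v` and applying the `A_m`
condition gives `⨍ v ≤ [v]_{A_m} ∏ ⨍ gᵢ` (for `m = 1` this is `A₁` together with
`ess inf v ≤ ⨍ v`). Finally `⨍ gᵢ ≤ [gᵢ]_{A₁} ess inf gᵢ` and `(ess inf gᵢ)^m ≤ ess inf wᵢ`.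
-/

open MeasureTheory ENNReal Set Filter

noncomputable section

section Averages

variable {α : Type*} [MeasurableSpace α] {μ : Measure α}

lemma isCoboundedUnder_ge_ae [NeZero μ] (f : α → ℝ) :
    IsCoboundedUnder (· ≥ ·) (ae μ) f := by
  obtain ⟨k, hk⟩ : ∃ k : ℕ, ¬∀ᵐ x ∂μ, (k : ℝ) ≤ f x := by
    by_contra! h
    obtain ⟨x, hx⟩ := (ae_all_iff.2 h).exists
    obtain ⟨k, hk⟩ := exists_nat_gt (f x)
    exact (hx k).not_gt hk
  refine ⟨k, fun a ha => ?_⟩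
  by_contra! hka
  exact hk (ha.mono fun x hx => hka.le.trans hx)

lemma average_nonneg_of_ae {f : α → ℝ} (hf : ∀ᵐ x ∂μ, 0 ≤ f x) : 0 ≤ ⨍ x, f x ∂μ := by
  rw [average_eq]
  exact smul_nonneg (by positivity) (integral_nonneg_of_ae hf)

lemma average_pos_of_ae [IsFiniteMeasure μ] [NeZero μ] {f : α → ℝ} (hf : Integrable f μ)
    (hpos : ∀ᵐ x ∂μ, 0 < f x) : 0 < ⨍ x, f x ∂μ := by
  rw [average_eq]
  refine smul_pos (inv_pos.2 measureReal_univ_pos) ?_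
  rw [integral_pos_iff_support_of_nonneg_ae (hpos.mono fun x hx => hx.le) hf]
  refine pos_iff_ne_zero.2 fun h => ?_
  obtain ⟨x, hx, hfx⟩ := ((measure_eq_zero_iff_ae_notMem.1 h).and hpos).exists
  exact hx hfx.ne'

lemma essInf_le_average [IsFiniteMeasure μ] [NeZero μ] {f : α → ℝ} (hf : Integrable f μ)
    (hbdd : IsBoundedUnder (· ≥ ·) (ae μ) f) : essInf f μ ≤ ⨍ x, f x ∂μ := by
  obtain ⟨x, hxN, hx⟩ :=
    exists_notMem_null_le_average (NeZero.ne μ) hf (ae_iff.1 (ae_essInf_le hbdd))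
  exact (not_not.1 hxN).trans hx

lemma Integrable.rpow_of_le_one [IsFiniteMeasure μ] {f : α → ℝ} (hf : Integrable f μ)
    (hf0 : ∀ᵐ x ∂μ, 0 ≤ f x) {p : ℝ} (hp0 : 0 ≤ p) (hp1 : p ≤ 1) :
    Integrable (fun x => f x ^ p) μ := by
  refine ((integrable_const 1).add hf).mono' (hf.aemeasurable.pow_const p).aestronglyMeasurable ?_
  filter_upwards [hf0] with x hx
  have := Real.geom_mean_le_arith_mean2_weighted hp0 (sub_nonneg.2 hp1) hx zero_le_one
    (add_sub_cancel p 1)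
  rw [Real.one_rpow, mul_one] at this
  rw [Real.norm_of_nonneg (Real.rpow_nonneg hx p), Pi.add_apply]
  nlinarith

lemma integrable_rpow_of_ae_le_of_nonpos [IsFiniteMeasure μ] {f : α → ℝ} {c s : ℝ} (hc : 0 < c)
    (hs : s ≤ 0) (hf : AEMeasurable f μ) (hcf : ∀ᵐ x ∂μ, c ≤ f x) :
    Integrable (fun x => f x ^ s) μ := by
  refine (integrable_const (c ^ s)).mono' (hf.pow_const s).aestronglyMeasurable ?_
  filter_upwards [hcf] with x hx
  rw [Real.norm_of_nonneg (Real.rpow_nonneg (hc.le.trans hx) s)]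
  exact Real.rpow_le_rpow_of_nonpos hc hx hs

lemma ENNReal.ofReal_rpow_mul_prod_rpow {ι : Type*} (s : Finset ι) {a : ℝ} {b : ι → ℝ}
    (ha : 0 ≤ a) (hb : ∀ i, 0 ≤ b i) {p q : ℝ} (hp : 0 ≤ p) (hq : 0 ≤ q) :
    ENNReal.ofReal a ^ p * ∏ i ∈ s, ENNReal.ofReal (b i) ^ q =
      ENNReal.ofReal (a ^ p * ∏ i ∈ s, b i ^ q) := by
  rw [ENNReal.ofReal_mul (Real.rpow_nonneg ha p), ENNReal.ofReal_rpow_of_nonneg ha hp,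
    ENNReal.ofReal_prod_of_nonneg fun i _ => Real.rpow_nonneg (hb i) q]
  exact congrArg _ (Finset.prod_congr rfl fun i _ => ENNReal.ofReal_rpow_of_nonneg (hb i) hq)

theorem one_le_integral_rpow_mul_prod_integral [IsProbabilityMeasure μ] {ι : Type*} [Fintype ι]
    {g : ι → α → ℝ} {t : ℝ} (ht : 0 < t) (hg_pos : ∀ i, ∀ᵐ x ∂μ, 0 < g i x)
    (hg : ∀ i, Integrable (g i) μ) (hh : Integrable (fun x => (∏ i, g i x) ^ (-t⁻¹)) μ) :
    1 ≤ (∫ x, (∏ i, g i x) ^ (-t⁻¹) ∂μ) ^ t * ∏ i, ∫ x, g i x ∂μ := by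
  set h := fun x => (∏ i, g i x) ^ (-t⁻¹)
  set s := t + Fintype.card ι
  have hs : 0 < s := by positivity
  have hh_nonneg : ∀ᵐ x ∂μ, 0 ≤ h x :=
    (ae_all_iff.2 hg_pos).mono fun x hx =>
      Real.rpow_nonneg (Finset.prod_nonneg fun i _ => (hx i).le) _
  have hIh : 0 ≤ ∫ x, h x ∂μ := integral_nonneg_of_ae hh_nonneg
  have hIg : ∀ i, 0 ≤ ∫ x, g i x ∂μ := fun i =>
    integral_nonneg_of_ae ((hg_pos i).mono fun x hx => hx.le)
  -- the exponents `t / s` and `s⁻¹` (`card ι` times) sum to one and make the integrand constant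
  have h_one : ∀ᵐ x ∂μ, h x ^ (t / s) * ∏ i, g i x ^ s⁻¹ = 1 := by
    filter_upwards [ae_all_iff.2 hg_pos] with x hx
    have hv : 0 < ∏ i, g i x := Finset.prod_pos fun i _ => hx i
    rw [Real.finsetProd_rpow _ _ (fun i _ => (hx i).le), ← Real.rpow_mul hv.le,
      ← Real.rpow_add hv, show -t⁻¹ * (t / s) + s⁻¹ = 0 by field_simp; ring, Real.rpow_zero]
  have holder : 1 ≤ (∫ x, h x ∂μ) ^ (t / s) * ∏ i, (∫ x, g i x ∂μ) ^ s⁻¹ := by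
    rw [← ENNReal.one_le_ofReal,
      ← ENNReal.ofReal_rpow_mul_prod_rpow _ hIh hIg (by positivity) (by positivity)]
    calc (1 : ℝ≥0∞)
        = ∫⁻ x, ENNReal.ofReal (h x) ^ (t / s) * ∏ i, ENNReal.ofReal (g i x) ^ s⁻¹ ∂μ := by
          rw [lintegral_congr_ae (g := fun _ => 1), lintegral_const, measure_univ, one_mul]
          filter_upwards [h_one, hh_nonneg, ae_all_iff.2 hg_pos] with x hx hhx hgx
          rw [ENNReal.ofReal_rpow_mul_prod_rpow _ hhx (fun i => (hgx i).le) (by positivity)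
            (by positivity), hx, ENNReal.ofReal_one]
      _ ≤ (∫⁻ x, ENNReal.ofReal (h x) ∂μ) ^ (t / s) *
            ∏ i, (∫⁻ x, ENNReal.ofReal (g i x) ∂μ) ^ s⁻¹ :=
          ENNReal.lintegral_mul_prod_norm_pow_le _ hh.aemeasurable.ennreal_ofReal
            (fun i _ => (hg i).aemeasurable.ennreal_ofReal) _
            (by simp only [Finset.sum_const, Finset.card_univ, nsmul_eq_mul, s]; field_simp)
            (by positivity) (fun _ _ => by positivity)
      _ = _ := by
          simp_rw [ofReal_integral_eq_lintegral_ofReal hh hh_nonneg,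
            ofReal_integral_eq_lintegral_ofReal (hg _) ((hg_pos _).mono fun x hx => hx.le)]
  calc (1 : ℝ) ≤ ((∫ x, h x ∂μ) ^ (t / s) * ∏ i, (∫ x, g i x ∂μ) ^ s⁻¹) ^ s :=
        Real.one_le_rpow holder hs.le
    _ = (∫ x, h x ∂μ) ^ t * ∏ i, ∫ x, g i x ∂μ := by
        have hIg' : 0 ≤ ∏ i, ∫ x, g i x ∂μ := Finset.prod_nonneg fun i _ => hIg i
        rw [Real.finsetProd_rpow _ _ (fun i _ => hIg i), Real.mul_rpow (by positivity)
          (by positivity), ← Real.rpow_mul hIh, div_mul_cancel₀ _ hs.ne',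
          Real.rpow_inv_rpow hIg' hs.ne']

theorem one_le_average_rpow_mul_prod_average [IsFiniteMeasure μ] [NeZero μ] {ι : Type*}
    [Fintype ι] {g : ι → α → ℝ} {t : ℝ} (ht : 0 < t) (hg_pos : ∀ i, ∀ᵐ x ∂μ, 0 < g i x)
    (hg : ∀ i, Integrable (g i) μ) (hh : Integrable (fun x => (∏ i, g i x) ^ (-t⁻¹)) μ) :
    1 ≤ (⨍ x, (∏ i, g i x) ^ (-t⁻¹) ∂μ) ^ t * ∏ i, ⨍ x, g i x ∂μ := by
  have hc : (μ univ)⁻¹ ≠ ∞ := ENNReal.inv_ne_top.2 (Measure.measure_univ_ne_zero.2 (NeZero.ne μ))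
  simp only [average_eq']
  exact one_le_integral_rpow_mul_prod_integral ht (fun i => Measure.ae_smul_measure (hg_pos i) _)
    (fun i => (hg i).smul_measure hc) (hh.smul_measure hc)

theorem average_prod_le_mul_prod_average [IsFiniteMeasure μ] [NeZero μ] {m : ℕ} (hm : 2 ≤ m)
    {g : Fin m → α → ℝ} {C : ℝ} (hg_pos : ∀ i, ∀ᵐ x ∂μ, 0 < g i x)
    (hg : ∀ i, Integrable (g i) μ)
    (hh : Integrable (fun x => (∏ i, g i x) ^ (1 - (m : ℝ) / ((m : ℝ) - 1))) μ)
    (hC : (⨍ x, ∏ i, g i x ∂μ) *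
      (⨍ x, (∏ i, g i x) ^ (1 - (m : ℝ) / ((m : ℝ) - 1)) ∂μ) ^ (m - 1) ≤ C) :
    ⨍ x, ∏ i, g i x ∂μ ≤ C * ∏ i, ⨍ x, g i x ∂μ := by
  have hm' : (1 : ℝ) < m := by exact_mod_cast hm
  have hm1 : ((m - 1 : ℕ) : ℝ) = m - 1 := by rw [Nat.cast_sub (by omega), Nat.cast_one]
  have hexp : 1 - (m : ℝ) / ((m : ℝ) - 1) = -((m - 1 : ℕ) : ℝ)⁻¹ := by
    rw [hm1]
    field_simp [(sub_pos.2 hm').ne']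
    ring
  have holder := one_le_average_rpow_mul_prod_average (t := ((m - 1 : ℕ) : ℝ))
    (by rw [hm1]; linarith) hg_pos hg (hexp ▸ hh)
  rw [Real.rpow_natCast, ← hexp] at holder
  have hv : 0 ≤ ⨍ x, ∏ i, g i x ∂μ := average_nonneg_of_ae <|
    (ae_all_iff.2 hg_pos).mono fun x hx => Finset.prod_nonneg fun i _ => (hx i).le
  have hprod : 0 ≤ ∏ i, ⨍ x, g i x ∂μ := Finset.prod_nonneg fun i _ =>
    average_nonneg_of_ae ((hg_pos i).mono fun x hx => hx.le)
  calc ⨍ x, ∏ i, g i x ∂μ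
      ≤ (⨍ x, ∏ i, g i x ∂μ) *
          ((⨍ x, (∏ i, g i x) ^ (1 - (m : ℝ) / ((m : ℝ) - 1)) ∂μ) ^ (m - 1) *
            ∏ i, ⨍ x, g i x ∂μ) := le_mul_of_one_le_right hv holder
    _ ≤ C * ∏ i, ⨍ x, g i x ∂μ := by
      rw [← mul_assoc]
      exact mul_le_mul_of_nonneg_right hC hprod

lemma essInf_rpow_inv_pow_le [NeZero μ] {f : α → ℝ} (hf : ∀ᵐ x ∂μ, 0 ≤ f x) {m : ℕ}
    (hm : m ≠ 0) : essInf (fun x => f x ^ ((1 : ℝ) / m)) μ ^ m ≤ essInf f μ := by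
  have hroot : ∀ᵐ x ∂μ, 0 ≤ f x ^ ((1 : ℝ) / m) := hf.mono fun x hx => Real.rpow_nonneg hx _
  have h0 : 0 ≤ essInf (fun x => f x ^ ((1 : ℝ) / m)) μ :=
    le_essInf_of_ae_le 0 hroot (isCoboundedUnder_ge_ae _)
  refine le_essInf_of_ae_le _ ?_ (isCoboundedUnder_ge_ae _)
  filter_upwards [ae_essInf_le (isBoundedUnder_of_eventually_ge hroot), hf] with x hx hfx
  calc essInf (fun x => f x ^ ((1 : ℝ) / m)) μ ^ m ≤ (f x ^ ((1 : ℝ) / m)) ^ m :=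
        pow_le_pow_left₀ h0 hx m
    _ = f x := by
      rw [← Real.rpow_natCast, ← Real.rpow_mul hfx, one_div_mul_cancel (by positivity),
        Real.rpow_one]

lemma setIntegral_div_eq_setAverage (f : α → ℝ) (s : Set α) :
    (∫ x in s, f x ∂μ) / (μ s).toReal = ⨍ x in s, f x ∂μ := by
  rw [setAverage_eq, smul_eq_mul, measureReal_def, div_eq_inv_mul]

end Averages

section Cube

variable {n : ℕ}

lemma cube_eq_preimage (c : Rn n) (r : ℝ) :
    cube c r = (MeasurableEquiv.toLp 2 (Fin n → ℝ)).symm ⁻¹'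
      univ.pi fun i => Icc (c i - r / 2) (c i + r / 2) := by
  ext x
  show (∀ i, |x i - c i| ≤ r / 2) ↔ ∀ i ∈ univ, x i ∈ Icc (c i - r / 2) (c i + r / 2)
  simp only [abs_sub_le_iff, mem_Icc, mem_univ, true_imp_iff, sub_le_iff_le_add]
  exact forall_congr' fun i => by constructor <;> rintro ⟨h₁, h₂⟩ <;> constructor <;> linarith

lemma volume_cube (c : Rn n) (r : ℝ) : volume (cube c r) = ENNReal.ofReal r ^ n := by
  rw [cube_eq_preimage,
    (EuclideanSpace.volume_preserving_symm_measurableEquiv_toLp (Fin n)).measure_preimage_equiv,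
    volume_pi_pi]
  simp [Real.volume_Icc, add_sub_sub_cancel]

lemma isCompact_cube (c : Rn n) (r : ℝ) : IsCompact (cube c r) := by
  rw [cube_eq_preimage]
  exact (EuclideanSpace.equiv (Fin n) ℝ).toHomeomorph.isCompact_preimage.2
    (isCompact_univ_pi fun i => isCompact_Icc)

instance (c : Rn n) (r : ℝ) : IsFiniteMeasure (volume.restrict (cube c r)) :=
  isFiniteMeasure_restrict.2 (by simp [volume_cube])

lemma neZero_restrict_cube (c : Rn n) {r : ℝ} (hr : 0 < r) :
    NeZero (volume.restrict (cube c r)) :=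
  ⟨by simp [Measure.restrict_eq_zero, volume_cube, hr]⟩

end Cube

section Weights

variable {n : ℕ} {c : Rn n} {r : ℝ}

lemma A1Bound.setAverage_le {w : Rn n → ℝ} {C : ℝ} (h : A1Bound w C) (hr : 0 < r) :
    ⨍ x in cube c r, w x ≤ C * essInf w (volume.restrict (cube c r)) := by
  have hV : 0 < (volume (cube c r)).toReal := by
    rw [volume_cube, ENNReal.toReal_pow, ENNReal.toReal_ofReal hr.le]
    positivity
  rw [← setIntegral_div_eq_setAverage, div_le_iff₀ hV]
  linarith [h c r hr]

lemma A1Bound.essInf_pos {w : Rn n → ℝ} {C : ℝ} (h : A1Bound w C) (hC : 0 ≤ C) (hr : 0 < r)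
    (hw_pos : ∀ᵐ x ∂volume.restrict (cube c r), 0 < w x) (hw : IntegrableOn w (cube c r)) :
    0 < essInf w (volume.restrict (cube c r)) :=
  have := neZero_restrict_cube c hr
  pos_of_mul_pos_right ((average_pos_of_ae hw hw_pos).trans_le (h.setAverage_le hr)) hC

lemma A1Bound.setAverage_rpow_pow_le {w : Rn n → ℝ} {m : ℕ} (hm : m ≠ 0) {C : ℝ}
    (h : A1Bound (fun x => w x ^ ((1 : ℝ) / m)) C) (hC : 0 ≤ C) (hr : 0 < r)
    (hw : ∀ᵐ x ∂volume.restrict (cube c r), 0 ≤ w x) :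
    (⨍ x in cube c r, w x ^ ((1 : ℝ) / m)) ^ m ≤
      C ^ m * essInf w (volume.restrict (cube c r)) := by
  have := neZero_restrict_cube c hr
  calc (⨍ x in cube c r, w x ^ ((1 : ℝ) / m)) ^ m
      ≤ (C * essInf (fun x => w x ^ ((1 : ℝ) / m)) (volume.restrict (cube c r))) ^ m :=
        pow_le_pow_left₀ (average_nonneg_of_ae (hw.mono fun x hx => Real.rpow_nonneg hx _))
          (h.setAverage_le hr) m
    _ ≤ C ^ m * essInf w (volume.restrict (cube c r)) := by
        rw [mul_pow]
        exact mul_le_mul_of_nonneg_left (essInf_rpow_inv_pow_le hw hm) (pow_nonneg hC m)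

lemma ApBound.setAverage_prod_le {m : ℕ} (hm : 1 ≤ m) {g : Fin m → Rn n → ℝ} {C : ℝ}
    (h : ApBound m (fun x => ∏ i, g i x) C) (hC : 0 ≤ C) (hr : 0 < r)
    (hg_pos : ∀ i, ∀ᵐ x ∂volume.restrict (cube c r), 0 < g i x)
    (hg : ∀ i, IntegrableOn (g i) (cube c r))
    (hg_inf : ∀ i, 0 < essInf (g i) (volume.restrict (cube c r))) :
    ⨍ x in cube c r, ∏ i, g i x ≤ C * ∏ i, ⨍ x in cube c r, g i x := by
  have := neZero_restrict_cube c hr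
  rcases hm.eq_or_lt with rfl | hm
  · simp only [ApBound, if_true, Fin.prod_univ_one] at h ⊢
    exact (h.setAverage_le hr).trans <| mul_le_mul_of_nonneg_left
      (essInf_le_average (hg 0) (isBoundedUnder_of_eventually_ge ((hg_pos 0).mono
        fun x hx => hx.le))) hC
  refine average_prod_le_mul_prod_average hm hg_pos hg ?_ ?_
  · refine integrable_rpow_of_ae_le_of_nonpos
      (Finset.prod_pos fun i (_ : i ∈ Finset.univ) => hg_inf i) ?_
      (Finset.aemeasurable_fun_prod _ fun i _ => (hg i).aemeasurable) ?_
    · have : (1 : ℝ) < m := by exact_mod_cast hm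
      rw [sub_nonpos, le_div_iff₀ (by linarith)]
      linarith
    · filter_upwards [ae_all_iff.2 fun i => ae_essInf_le (isBoundedUnder_of_eventually_ge
        ((hg_pos i).mono fun x hx => hx.le))] with x hx
      exact Finset.prod_le_prod (fun i _ => (hg_inf i).le) fun i _ => hx i
  · simp only [ApBound, if_neg hm.ne', setIntegral_div_eq_setAverage] at h
    exact h c r hr

end Weights

/-- If `wᵢ^{1/m} ∈ A₁` for each `i` and `v_{w⃗} = ∏ᵢ wᵢ^{1/m} ∈ A_m`, then
`w⃗ ∈ A_{(1,…,1)}` with `[w⃗] ≤ [v_{w⃗}]_{A_m}^m ∏ᵢ [wᵢ^{1/m}]_{A₁}^m`. -/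
theorem stmt8 {n m : ℕ} (hm : 1 ≤ m) (w : Fin m → Rn n → ℝ) (Cv : ℝ) (Ci : Fin m → ℝ)
    (hw : ∀ i, LocallyIntegrable (w i) volume) (hpos : ∀ i, ∀ᵐ x, 0 < w i x)
    (hCv : 0 ≤ Cv) (hCi : ∀ i, 0 ≤ Ci i)
    (hA1 : ∀ i, A1Bound (fun x => w i x ^ ((1 : ℝ) / m)) (Ci i))
    (hAm : ApBound m (fun x => ∏ i, w i x ^ ((1 : ℝ) / m)) Cv) :
    MultiA1Bound w (Cv ^ m * ∏ i, Ci i ^ m) := by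
  intro c r hr
  have := neZero_restrict_cube c hr
  have hw_pos i : ∀ᵐ x ∂volume.restrict (cube c r), 0 < w i x := ae_restrict_of_ae (hpos i)
  have hg_pos i : ∀ᵐ x ∂volume.restrict (cube c r), 0 < w i x ^ ((1 : ℝ) / m) :=
    (hw_pos i).mono fun x hx => Real.rpow_pos_of_pos hx _
  have hg i : IntegrableOn (fun x => w i x ^ ((1 : ℝ) / m)) (cube c r) :=
    Integrable.rpow_of_le_one ((hw i).integrableOn_isCompact (isCompact_cube c r))
      ((hw_pos i).mono fun x hx => hx.le) (by positivity)
      (div_le_one_of_le₀ (by exact_mod_cast hm) (by positivity))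
  have hkey := hAm.setAverage_prod_le hm hCv hr hg_pos hg fun i =>
    (hA1 i).essInf_pos (hCi i) hr (hg_pos i) (hg i)
  have hv : 0 ≤ ⨍ x in cube c r, ∏ i, w i x ^ ((1 : ℝ) / m) := average_nonneg_of_ae <|
    (ae_all_iff.2 hg_pos).mono fun x hx => Finset.prod_nonneg fun i _ => (hx i).le
  rw [setIntegral_div_eq_setAverage, mul_assoc, ← Finset.prod_mul_distrib]
  calc (⨍ x in cube c r, ∏ i, w i x ^ ((1 : ℝ) / m)) ^ m
      ≤ (Cv * ∏ i, ⨍ x in cube c r, w i x ^ ((1 : ℝ) / m)) ^ m := pow_le_pow_left₀ hv hkey m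
    _ = Cv ^ m * ∏ i, (⨍ x in cube c r, w i x ^ ((1 : ℝ) / m)) ^ m := by
      rw [mul_pow, Finset.prod_pow]
    _ ≤ Cv ^ m * ∏ i, (Ci i ^ m * essInf (w i) (volume.restrict (cube c r))) := by
      refine mul_le_mul_of_nonneg_left (Finset.prod_le_prod (fun i _ => ?_) fun i _ =>
        (hA1 i).setAverage_rpow_pow_le (by omega) (hCi i) hr ((hw_pos i).mono fun x hx => hx.le))
        (pow_nonneg hCv m)
      exact pow_nonneg (average_nonneg_of_ae ((hg_pos i).mono fun x hx => hx.le)) m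
end
end
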